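/- Let L be a left ideal of the n-th Weyl algebra W, let ≼ be a normal ordering of W, and let B be a Gröbner basis of L with respect to ≼. If ≼' is a normal ordering of W whose restriction to Supp(B) coincides with the restriction of ≼ to Supp(B), then B is a Gröbner basis of L with respect to ≼'. -/

import Mathlib

/-- A total ordering on `S`: an antisymmetric, transitive and total binary relation. -/
def IsTotalOrdering {S : Type*} (r : S → S → Prop) : Prop :=
  (∀ a b, r a b → r b a → a = b) ∧ (∀ a b c, r a b → r b c → r a c) ∧ (∀ a b, r a b ∨ r b a)

/-- `TO S` is the set of all total orderings on `S`. -/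
def TO (S : Type*) : Type _ := {r : S → S → Prop // IsTotalOrdering r}

/-- The underlying relation of a total ordering. -/
def TO.rel {S : Type*} (r : TO S) : S → S → Prop := Subtype.val r

/-- The subbasic open set `𝔘_{(a,b)} = {≼ ∈ TO(S) : a ≼ b}`. -/
def USet {S : Type*} (a b : S) : Set (TO S) := {r | r.rel a b}

/-- The topology `𝒰` on `TO S`: the coarsest topology for which all `𝔘_{(a,b)}` are open. -/
instance TOTop (S : Type*) : TopologicalSpace (TO S) :=
  TopologicalSpace.generateFrom {U | ∃ a b, U = USet a b}


open MvPolynomial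

section Weyl

variable {K : Type*} [Field K] {n : ℕ} {W : Type*} [Ring W] [Algebra K W]

/-- The normal monomial `ξ^λ ∂^μ` of the Weyl algebra, for generators `ξ i` and `∂ i`. -/
def nm (ξ dd : Fin n → W) (lam mu : Fin n → ℕ) : W :=
  (List.ofFn fun i => ξ i ^ lam i).prod * (List.ofFn fun i => dd i ^ mu i).prod

/-- The set `N` of normal monomials `ξ^λ ∂^μ` of the Weyl algebra. -/
def NormalMonomials (ξ dd : Fin n → W) : Set W := {w | ∃ lam mu, w = nm ξ dd lam mu}

/-- The normal monomial `ξ^λ ∂^μ` as an element of `N`. -/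
def nmEl (ξ dd : Fin n → W) (lam mu : Fin n → ℕ) : ↥(NormalMonomials ξ dd) :=
  ⟨nm ξ dd lam mu, lam, mu, rfl⟩

/-- A normal ordering of the Weyl algebra: a total ordering `≼` on `N` such that
`1 = ξ^0∂^0 ≼ ξ^λ∂^μ` for all `λ, μ`, and which is compatible with the addition of
exponents. -/
def IsNormalOrdering (ξ dd : Fin n → W) (r : TO ↥(NormalMonomials ξ dd)) : Prop :=
  (∀ lam mu, r.rel (nmEl ξ dd 0 0) (nmEl ξ dd lam mu)) ∧
  ∀ lam mu rho sig al be : Fin n → ℕ,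
    r.rel (nmEl ξ dd lam mu) (nmEl ξ dd rho sig) →
      r.rel (nmEl ξ dd (lam + al) (mu + be)) (nmEl ξ dd (rho + al) (sig + be))

/-- The set `NO(N)` of all normal orderings. -/
def NOSet (ξ dd : Fin n → W) : Set (TO ↥(NormalMonomials ξ dd)) :=
  {r | IsNormalOrdering ξ dd r}

/-- The exponent vector `(λ, μ)` as a finitely supported function on `Fin n ⊕ Fin n`. -/
noncomputable def expof {n : ℕ} (lam mu : Fin n → ℕ) : (Fin n ⊕ Fin n) →₀ ℕ :=
  Finsupp.equivFunOnFinite.symm (Sum.elim lam mu)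

/-- The normal monomial of `N` corresponding to an exponent vector `d`. -/
noncomputable def nmD (ξ dd : Fin n → W) (d : (Fin n ⊕ Fin n) →₀ ℕ) :
    ↥(NormalMonomials ξ dd) :=
  nmEl ξ dd (fun i => d (Sum.inl i)) (fun i => d (Sum.inr i))

/-- The ordering on exponent vectors induced by a total ordering `r` on `N`. -/
noncomputable def rD (ξ dd : Fin n → W) (r : TO ↥(NormalMonomials ξ dd))
    (d e : (Fin n ⊕ Fin n) →₀ ℕ) : Prop :=
  r.rel (nmD ξ dd d) (nmD ξ dd e)

/-- `IsLTerm ξ dd Φ r w d` says that the exponent vector `d`, i.e. the normal monomial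
`ξ^λ∂^μ` with `(λ,μ) = d`, is the `r`-greatest element of the support of `w`, that is,
`lt_≼(w) = ξ^λ∂^μ` (equivalently `LT_≼(w) = X^λY^μ`). -/
noncomputable def IsLTerm (ξ dd : Fin n → W)
    (Φ : W ≃ₗ[K] MvPolynomial (Fin n ⊕ Fin n) K) (r : TO ↥(NormalMonomials ξ dd))
    (w : W) (d : (Fin n ⊕ Fin n) →₀ ℕ) : Prop :=
  d ∈ (Φ w).support ∧ ∀ c ∈ (Φ w).support, rD ξ dd r c d

/-- The ideal `LT_≼(L) = ⟨LT_≼(x) : x ∈ L, x ≠ 0⟩` of `K[X,Y]`. -/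
noncomputable def LTIdeal (ξ dd : Fin n → W)
    (Φ : W ≃ₗ[K] MvPolynomial (Fin n ⊕ Fin n) K) (r : TO ↥(NormalMonomials ξ dd))
    (L : Set W) : Ideal (MvPolynomial (Fin n ⊕ Fin n) K) :=
  Ideal.span {p | ∃ x ∈ L, x ≠ 0 ∧ ∃ d, IsLTerm ξ dd Φ r x d ∧ p = monomial d 1}

/-- `B` is a Gröbner basis of the left ideal `L` with respect to `r`: `B` is a finite
subset of `L` with `L = Σ_{b∈B} W·b` and `LT_≼(L) = ⟨LT_≼(b) : b ∈ B, b ≠ 0⟩`. -/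
noncomputable def IsGroebnerBasis (ξ dd : Fin n → W)
    (Φ : W ≃ₗ[K] MvPolynomial (Fin n ⊕ Fin n) K) (r : TO ↥(NormalMonomials ξ dd))
    (L : Submodule W W) (B : Finset W) : Prop :=
  (B : Set W) ⊆ (L : Set W) ∧ Submodule.span W (B : Set W) = L ∧
  LTIdeal ξ dd Φ r (L : Set W) =
    Ideal.span {p | ∃ b ∈ B, b ≠ 0 ∧ ∃ d, IsLTerm ξ dd Φ r b d ∧ p = monomial d 1}

end Weyl

/-!
Since `≼` and `≼'` agree on `Supp(B)`, every `b ∈ B` has the same leading monomial for both,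
so `⟨LT_≼(b)⟩ = ⟨LT_≼'(b)⟩ = LT_≼(L)`, and it remains to show `LT_≼'(x) ∈ LT_≼(L)` for
`0 ≠ x ∈ L`. The Weyl relations give `ξ^α∂^β · ξ^γ∂^δ = ξ^{α+γ}∂^{β+δ}` plus monomials that are
componentwise smaller, so left multiplication by `ξ^α∂^β` shifts the leading exponent by
`(α, β)` for every normal ordering at once. If `LT_≼(x) = X^e`, the Gröbner property yields
`b ∈ B` with `LT(b) ∣ X^e`, and subtracting the matching multiple of `b` produces a remainder
of smaller `≼`-leading exponent. By well-founded induction along `≼` (Dickson's lemma) the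
remainder's `≼'`-leading exponent lies in `LT_≼(L)`, and that of `x` is either it or `e`.
-/

theorem Pi.induction_add_single {ι : Type*} [Finite ι] [DecidableEq ι] {P : (ι → ℕ) → Prop}
    (zero : P 0) (step : ∀ g i, P g → P (g + Pi.single i 1)) (g : ι → ℕ) : P g := by
  induction g using WellFoundedLT.induction with
  | _ g ih =>
  rcases eq_or_ne g 0 with rfl | hg
  · exact zero
  obtain ⟨i, hi⟩ : ∃ i, g i ≠ 0 := by simpa [funext_iff] using hg
  have hsplit : g - Pi.single i 1 + Pi.single i 1 = g := by
    ext j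
    by_cases hj : j = i <;> simp [hj]
    omega
  rw [← hsplit]
  refine step _ _ (ih _ (Pi.lt_def.2 ⟨fun j => tsub_le_self, i, ?_⟩))
  simp only [Pi.sub_apply, Pi.single_eq_same]
  omega

section PowProd

variable {M : Type*} [Monoid M] {n : ℕ}

def powProd (c : Fin n → M) (g : Fin n → ℕ) : M := (List.ofFn fun i => c i ^ g i).prod

theorem powProd_zero (c : Fin n → M) : powProd c 0 = 1 := by
  simp [powProd]

theorem powProd_succ (c : Fin (n + 1) → M) (g : Fin (n + 1) → ℕ) :
    powProd c g = c 0 ^ g 0 * powProd (fun i => c i.succ) (fun i => g i.succ) := by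
  simp [powProd, List.ofFn_succ]

theorem powProd_add {c : Fin n → M} (hc : ∀ i j, Commute (c i) (c j)) (g h : Fin n → ℕ) :
    powProd c (g + h) = powProd c g * powProd c h := by
  induction n with
  | zero => simp [powProd]
  | succ n ih =>
    have hcomm : Commute (c 0 ^ h 0) (powProd (fun i => c i.succ) (fun i => g i.succ)) :=
      Commute.list_prod_right _ _ <| by
        simp only [List.mem_ofFn, forall_exists_index]
        rintro _ i rfl
        exact (hc 0 i.succ).pow_pow _ _
    have ih' := ih (fun i j => hc i.succ j.succ) (fun i => g i.succ) (fun i => h i.succ)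
    simp only [Pi.add_def] at ih' ⊢
    rw [powProd_succ, powProd_succ, powProd_succ, ih', pow_add, mul_assoc, mul_assoc,
      hcomm.left_comm]

theorem powProd_single (c : Fin n → M) (j : Fin n) : powProd c (Pi.single j 1) = c j := by
  induction n with
  | zero => exact j.elim0
  | succ n ih =>
    rw [powProd_succ]
    cases j using Fin.cases with
    | zero =>
      simp only [Pi.single_apply, Fin.succ_ne_zero, if_false, if_true, pow_one]
      exact (congrArg _ (powProd_zero _)).trans (mul_one _)
    | succ j =>
      simp only [Pi.single_apply, Fin.succ_inj, (Fin.succ_ne_zero j).symm, if_false, pow_zero,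
        one_mul]
      rw [← ih (fun i => c i.succ) j]
      congr 1
      ext i
      simp [Pi.single_apply]

theorem powProd_add_single {c : Fin n → M} (hc : ∀ i j, Commute (c i) (c j))
    (g : Fin n → ℕ) (j : Fin n) : powProd c (g + Pi.single j 1) = powProd c g * c j := by
  rw [powProd_add hc, powProd_single]

end PowProd

section WeylRelations

variable (R : Type*) [CommSemiring R] {W : Type*} [Ring W] [Algebra R W] {n : ℕ}

def lowerSpan (ξ dd : Fin n → W) (a : (Fin n → ℕ) × (Fin n → ℕ)) : Submodule R W :=
  Submodule.span R ((fun pq => nm ξ dd pq.1 pq.2) '' Set.Iio a)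

variable {R} {ξ dd : Fin n → W}

theorem nm_eq_powProd_mul_powProd (p q : Fin n → ℕ) : nm ξ dd p q = powProd ξ p * powProd dd q :=
  rfl

theorem lowerSpan_mono {a b : (Fin n → ℕ) × (Fin n → ℕ)} (h : a ≤ b) :
    lowerSpan R ξ dd a ≤ lowerSpan R ξ dd b :=
  Submodule.span_mono (Set.image_mono (Set.Iio_subset_Iio h))

theorem nm_mem_lowerSpan {p q : Fin n → ℕ} {a : (Fin n → ℕ) × (Fin n → ℕ)} (h : (p, q) < a) :
    nm ξ dd p q ∈ lowerSpan R ξ dd a :=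
  Submodule.subset_span ⟨(p, q), h, rfl⟩

theorem powProd_mul_mul_powProd_mem_lowerSpan (hξ : ∀ i j, Commute (ξ i) (ξ j))
    (hdd : ∀ i j, Commute (dd i) (dd j)) {a : (Fin n → ℕ) × (Fin n → ℕ)} {x : W}
    (hx : x ∈ lowerSpan R ξ dd a) (p q : Fin n → ℕ) :
    powProd ξ p * x * powProd dd q ∈ lowerSpan R ξ dd ((p, q) + a) := by
  have hmap := (Submodule.map_span_le (LinearMap.mulLeftRight R (powProd ξ p, powProd dd q))
    ((fun pq => nm ξ dd pq.1 pq.2) '' Set.Iio a) (lowerSpan R ξ dd ((p, q) + a))).2 ?_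
  · simpa using hmap (Submodule.mem_map_of_mem hx)
  rintro _ ⟨⟨p', q'⟩, hlt, rfl⟩
  have hnm : powProd ξ p * nm ξ dd p' q' * powProd dd q = nm ξ dd (p + p') (q + q') := by
    rw [nm_eq_powProd_mul_powProd, nm_eq_powProd_mul_powProd, powProd_add hξ, add_comm q,
      powProd_add hdd]
    noncomm_ring
  simpa [hnm] using nm_mem_lowerSpan (R := R) (ξ := ξ) (dd := dd) (add_lt_add_right hlt (p, q))

theorem dd_mul_powProd_sub_mem_span (hξ : ∀ i j, Commute (ξ i) (ξ j))
    (hrel : ∀ i j, dd i * ξ j - ξ j * dd i = if i = j then (1 : W) else 0) (i : Fin n)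
    (g : Fin n → ℕ) :
    dd i * powProd ξ g - powProd ξ g * dd i ∈ Submodule.span R (powProd ξ '' Set.Iio g) := by
  induction g using Pi.induction_add_single with
  | zero => simp [powProd_zero]
  | step g j ih =>
    have hlt : g < g + Pi.single j 1 := lt_add_of_pos_right g (Pi.single_pos.2 one_pos)
    have hsplit : dd i * powProd ξ (g + Pi.single j 1) - powProd ξ (g + Pi.single j 1) * dd i
        = (dd i * powProd ξ g - powProd ξ g * dd i) * ξ j
          + powProd ξ g * (dd i * ξ j - ξ j * dd i) := by
      rw [powProd_add_single hξ]
      noncomm_ring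
    rw [hsplit, hrel]
    refine Submodule.add_mem _ ?_ ?_
    · refine (Submodule.map_span_le (LinearMap.mulRight R (ξ j)) _ _).2 ?_ ⟨_, ih, rfl⟩
      rintro _ ⟨p, hp, rfl⟩
      refine Submodule.subset_span ⟨p + Pi.single j 1, Set.mem_Iio.2 (add_lt_add_left hp _), ?_⟩
      simp [powProd_add_single hξ]
    · split_ifs
      · simpa using Submodule.subset_span (R := R) (Set.mem_image_of_mem (powProd ξ) hlt)
      · simp

theorem powProd_mul_powProd_sub_nm_mem_lowerSpan (hξ : ∀ i j, Commute (ξ i) (ξ j))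
    (hdd : ∀ i j, Commute (dd i) (dd j))
    (hrel : ∀ i j, dd i * ξ j - ξ j * dd i = if i = j then (1 : W) else 0) (f g : Fin n → ℕ) :
    powProd dd f * powProd ξ g - nm ξ dd g f ∈ lowerSpan R ξ dd (g, f) := by
  induction f using Pi.induction_add_single generalizing g with
  | zero => simp [nm_eq_powProd_mul_powProd, powProd_zero]
  | step f i ih =>
    have hlt : (g, f) < (g, f + Pi.single i 1) :=
      Prod.mk_lt_mk_of_le_of_lt le_rfl (lt_add_of_pos_right f (Pi.single_pos.2 one_pos))
    have hsplit : powProd dd (f + Pi.single i 1) * powProd ξ g - nm ξ dd g (f + Pi.single i 1)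
        = powProd ξ 0 * (powProd dd f * powProd ξ g - nm ξ dd g f) * powProd dd (Pi.single i 1)
          + powProd dd f * (dd i * powProd ξ g - powProd ξ g * dd i) := by
      simp only [nm_eq_powProd_mul_powProd, powProd_add_single hdd, powProd_zero, powProd_single]
      noncomm_ring
    rw [hsplit]
    refine Submodule.add_mem _ ?_ ?_
    · have := powProd_mul_mul_powProd_mem_lowerSpan hξ hdd (ih g) 0 (Pi.single i 1)
      rwa [Prod.mk_add_mk, zero_add, add_comm] at this
    · refine (Submodule.map_span_le (LinearMap.mulLeft R (powProd dd f)) _ _).2 ?_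
        (Submodule.mem_map_of_mem (dd_mul_powProd_sub_mem_span hξ hrel i g))
      rintro _ ⟨p, hp, rfl⟩
      have hpf : (p, f) < (g, f + Pi.single i 1) :=
        lt_of_le_of_lt (Prod.mk_le_mk.2 ⟨le_of_lt hp, le_rfl⟩) hlt
      rw [LinearMap.mulLeft_apply, ← sub_add_cancel (powProd dd f * powProd ξ p) (nm ξ dd p f)]
      exact Submodule.add_mem _ (lowerSpan_mono hpf.le (ih p)) (nm_mem_lowerSpan hpf)

theorem nm_mul_nm_sub_mem_lowerSpan (hξ : ∀ i j, Commute (ξ i) (ξ j))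
    (hdd : ∀ i j, Commute (dd i) (dd j))
    (hrel : ∀ i j, dd i * ξ j - ξ j * dd i = if i = j then (1 : W) else 0)
    (f₁ f₂ g₁ g₂ : Fin n → ℕ) :
    nm ξ dd f₁ f₂ * nm ξ dd g₁ g₂ - nm ξ dd (f₁ + g₁) (f₂ + g₂) ∈
      lowerSpan R ξ dd (f₁ + g₁, f₂ + g₂) := by
  have h := powProd_mul_mul_powProd_mem_lowerSpan hξ hdd
    (powProd_mul_powProd_sub_nm_mem_lowerSpan (R := R) hξ hdd hrel f₂ g₁) f₁ g₂
  rw [Prod.mk_add_mk, add_comm g₂] at h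
  convert h using 1
  simp only [nm_eq_powProd_mul_powProd, powProd_add hξ, powProd_add hdd]
  noncomm_ring

end WeylRelations

section Exponents

variable {n : ℕ}

theorem expof_le_expof_iff {p q p' q' : Fin n → ℕ} :
    expof p q ≤ expof p' q' ↔ (p, q) ≤ (p', q') :=
  Finsupp.orderIsoFunOnFinite.symm.le_iff_le.trans Sum.elim_le_elim_iff

theorem expof_strictMono : StrictMono fun a : (Fin n → ℕ) × (Fin n → ℕ) => expof a.1 a.2 :=
  strictMono_of_le_iff_le fun _ _ => expof_le_expof_iff.symm

theorem expof_add (p q p' q' : Fin n → ℕ) :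
    expof (p + p') (q + q') = expof p q + expof p' q' := by
  ext (i | i) <;> rfl

theorem expof_comp_inl_inr (d : (Fin n ⊕ Fin n) →₀ ℕ) :
    expof (fun i => d (Sum.inl i)) (fun i => d (Sum.inr i)) = d := by
  ext (i | i) <;> rfl

end Exponents

section NormalOrderings

variable {K : Type*} [Field K] {n : ℕ} {W : Type*} [Ring W] [Algebra K W] {ξ dd : Fin n → W}
  {ρ : TO ↥(NormalMonomials ξ dd)}

theorem rD_refl (ρ : TO ↥(NormalMonomials ξ dd)) (d : (Fin n ⊕ Fin n) →₀ ℕ) : rD ξ dd ρ d d :=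
  (ρ.2.2.2 _ _).elim id id

theorem rD_trans {d e f : (Fin n ⊕ Fin n) →₀ ℕ} (h₁ : rD ξ dd ρ d e) (h₂ : rD ξ dd ρ e f) :
    rD ξ dd ρ d f :=
  ρ.2.2.1 _ _ _ h₁ h₂

theorem rD_total (ρ : TO ↥(NormalMonomials ξ dd)) (d e : (Fin n ⊕ Fin n) →₀ ℕ) :
    rD ξ dd ρ d e ∨ rD ξ dd ρ e d :=
  ρ.2.2.2 _ _

theorem exists_forall_rD_of_nonempty (ρ : TO ↥(NormalMonomials ξ dd))
    {s : Finset ((Fin n ⊕ Fin n) →₀ ℕ)} (hs : s.Nonempty) : ∃ d ∈ s, ∀ c ∈ s, rD ξ dd ρ c d := by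
  induction hs using Finset.Nonempty.cons_induction with
  | singleton a => exact ⟨a, by simp, by simp [rD_refl]⟩
  | cons a s ha hs ih =>
    obtain ⟨d, hd, hmax⟩ := ih
    rcases rD_total ρ a d with h | h
    · exact ⟨d, by simp [hd], by simpa [h] using hmax⟩
    · exact ⟨a, by simp, by simpa [rD_refl] using fun c hc => rD_trans (hmax c hc) h⟩

theorem Phi_nmD {Φ : W ≃ₗ[K] MvPolynomial (Fin n ⊕ Fin n) K}
    (hΦ : ∀ lam mu, Φ (nm ξ dd lam mu) = monomial (expof lam mu) 1) (d : (Fin n ⊕ Fin n) →₀ ℕ) :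
    Φ (nmD ξ dd d) = monomial d 1 := by
  rw [nmD, nmEl, hΦ, expof_comp_inl_inr]

theorem rD_antisymm {Φ : W ≃ₗ[K] MvPolynomial (Fin n ⊕ Fin n) K}
    (hΦ : ∀ lam mu, Φ (nm ξ dd lam mu) = monomial (expof lam mu) 1)
    {d e : (Fin n ⊕ Fin n) →₀ ℕ} (h₁ : rD ξ dd ρ d e) (h₂ : rD ξ dd ρ e d) : d = e := by
  have h := congrArg (fun w : ↥(NormalMonomials ξ dd) => Φ w) (ρ.2.1 _ _ h₁ h₂)
  simp only [Phi_nmD hΦ] at h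
  exact monomial_left_injective one_ne_zero h

theorem rD_add_right (hρ : IsNormalOrdering ξ dd ρ) {d e : (Fin n ⊕ Fin n) →₀ ℕ}
    (h : rD ξ dd ρ d e) (c : (Fin n ⊕ Fin n) →₀ ℕ) : rD ξ dd ρ (d + c) (e + c) :=
  hρ.2 _ _ _ _ _ _ h

theorem rD_of_le (hρ : IsNormalOrdering ξ dd ρ) {d e : (Fin n ⊕ Fin n) →₀ ℕ} (h : d ≤ e) :
    rD ξ dd ρ d e := by
  have h0 : rD ξ dd ρ 0 (e - d) := hρ.1 _ _
  simpa [tsub_add_cancel_of_le h] using rD_add_right hρ h0 d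

-- Dickson's lemma: `≤` on exponents is a well-quasi-order, and `ρ` extends it.
theorem wellFounded_rD (hρ : IsNormalOrdering ξ dd ρ) :
    WellFounded fun d e : (Fin n ⊕ Fin n) →₀ ℕ => rD ξ dd ρ d e ∧ ¬rD ξ dd ρ e d := by
  have : IsPreorder _ (rD ξ dd ρ) := { refl := rD_refl ρ, trans := fun _ _ _ => rD_trans }
  refine WellQuasiOrdered.wellFounded fun f => ?_
  obtain ⟨m, m', hlt, hle⟩ := wellQuasiOrdered_le f
  exact ⟨m, m', hlt, rD_of_le hρ hle⟩

end NormalOrderings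

theorem MvPolynomial.coeff_eq_one_and_le_of_sub_monomial_mem {σ R : Type*} [CommRing R]
    {p : MvPolynomial σ R} {t : σ →₀ ℕ} (h : p - monomial t 1 ∈ restrictSupport R (Set.Iio t)) :
    coeff t p = 1 ∧ ∀ x ∈ p.support, x ≤ t := by
  classical
  rw [mem_restrictSupport_iff] at h
  have hcoeff : ∀ x, ¬x < t → coeff x p = coeff x (monomial t (1 : R)) := fun x hx =>
    sub_eq_zero.1 (by simpa [coeff_sub] using mt (@h x) hx)
  refine ⟨by simpa using hcoeff t (lt_irrefl t), fun x hx => ?_⟩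
  by_contra hxt
  have hx0 := hcoeff x (mt le_of_lt hxt)
  rw [coeff_monomial, if_neg fun h => hxt h.ge] at hx0
  exact mem_support_iff.1 hx hx0

section LeadingTerms

variable {K : Type*} [Field K] {n : ℕ} {W : Type*} [Ring W] [Algebra K W] {ξ dd : Fin n → W}
  {Φ : W ≃ₗ[K] MvPolynomial (Fin n ⊕ Fin n) K} {ρ : TO ↥(NormalMonomials ξ dd)}

theorem Phi_mem_restrictSupport_of_mem_lowerSpan
    (hΦ : ∀ lam mu, Φ (nm ξ dd lam mu) = monomial (expof lam mu) 1)
    {a : (Fin n → ℕ) × (Fin n → ℕ)} {z : W} (hz : z ∈ lowerSpan K ξ dd a) :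
    Φ z ∈ restrictSupport K (Set.Iio (expof a.1 a.2)) := by
  refine (Submodule.map_span_le Φ.toLinearMap _ _).2 ?_ (Submodule.mem_map_of_mem hz)
  rintro _ ⟨⟨p, q⟩, hlt, rfl⟩
  simpa [hΦ] using expof_strictMono hlt

theorem Phi_nmD_mul_nmD_sub_monomial_mem (hξ : ∀ i j, Commute (ξ i) (ξ j))
    (hdd : ∀ i j, Commute (dd i) (dd j))
    (hrel : ∀ i j, dd i * ξ j - ξ j * dd i = if i = j then (1 : W) else 0)
    (hΦ : ∀ lam mu, Φ (nm ξ dd lam mu) = monomial (expof lam mu) 1) (d e : (Fin n ⊕ Fin n) →₀ ℕ) :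
    Φ (nmD ξ dd d * nmD ξ dd e) - monomial (d + e) 1 ∈ restrictSupport K (Set.Iio (d + e)) := by
  have h := Phi_mem_restrictSupport_of_mem_lowerSpan hΦ
    (nm_mul_nm_sub_mem_lowerSpan (R := K) hξ hdd hrel (fun i => d (Sum.inl i))
      (fun i => d (Sum.inr i)) (fun i => e (Sum.inl i)) (fun i => e (Sum.inr i)))
  rwa [map_sub, hΦ, expof_add, expof_comp_inl_inr, expof_comp_inl_inr] at h

theorem eq_sum_coeff_smul_nmD (hΦ : ∀ lam mu, Φ (nm ξ dd lam mu) = monomial (expof lam mu) 1)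
    (b : W) : b = ∑ g ∈ (Φ b).support, coeff g (Φ b) • (nmD ξ dd g : W) := by
  apply Φ.injective
  simp only [map_sum, map_smul, Phi_nmD hΦ, smul_monomial, smul_eq_mul, mul_one]
  exact (Φ b).as_sum

theorem IsLTerm.coeff_nmD_mul_and_rD (hξ : ∀ i j, Commute (ξ i) (ξ j))
    (hdd : ∀ i j, Commute (dd i) (dd j))
    (hrel : ∀ i j, dd i * ξ j - ξ j * dd i = if i = j then (1 : W) else 0)
    (hΦ : ∀ lam mu, Φ (nm ξ dd lam mu) = monomial (expof lam mu) 1)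
    (hρ : IsNormalOrdering ξ dd ρ) {b : W}
    {eb : (Fin n ⊕ Fin n) →₀ ℕ} (hb : IsLTerm ξ dd Φ ρ b eb) (f : (Fin n ⊕ Fin n) →₀ ℕ) :
    coeff (f + eb) (Φ (nmD ξ dd f * b)) = coeff eb (Φ b) ∧
      ∀ x ∈ (Φ (nmD ξ dd f * b)).support, rD ξ dd ρ x (f + eb) := by
  classical
  have hprod g := coeff_eq_one_and_le_of_sub_monomial_mem
    (Phi_nmD_mul_nmD_sub_monomial_mem hξ hdd hrel hΦ f g)
  have hsum : Φ (nmD ξ dd f * b)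
      = ∑ g ∈ (Φ b).support, coeff g (Φ b) • Φ (nmD ξ dd f * nmD ξ dd g) := by
    conv_lhs => rw [eq_sum_coeff_smul_nmD hΦ b]
    simp only [Finset.mul_sum, mul_smul_comm, map_sum, map_smul]
  constructor
  · rw [hsum, coeff_sum, Finset.sum_eq_single_of_mem eb hb.1]
    · rw [coeff_smul, (hprod eb).1, smul_eq_mul, mul_one]
    · intro g hg hgeb
      have hnot : f + eb ∉ (Φ (nmD ξ dd f * nmD ξ dd g)).support := fun hmem =>
        hgeb (rD_antisymm hΦ (hb.2 g hg)
          (rD_of_le hρ ((add_le_add_iff_left f).1 ((hprod g).2 _ hmem))))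
      rw [coeff_smul, notMem_support_iff.1 hnot, smul_zero]
  · intro x hx
    rw [hsum] at hx
    obtain ⟨g, hg, hxg⟩ := Finset.mem_biUnion.1 (support_sum hx)
    refine rD_trans (rD_of_le hρ ((hprod g).2 x (Finsupp.support_smul hxg))) ?_
    simpa only [add_comm f] using rD_add_right hρ (hb.2 g hg) f

variable (Φ ρ) in
theorem exists_isLTerm {w : W} (hw : w ≠ 0) : ∃ d, IsLTerm ξ dd Φ ρ w d :=
  exists_forall_rD_of_nonempty ρ (support_nonempty.2 ((map_ne_zero_iff Φ Φ.injective).2 hw))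

theorem IsLTerm.ne_zero {w : W} {d : (Fin n ⊕ Fin n) →₀ ℕ} (h : IsLTerm ξ dd Φ ρ w d) : w ≠ 0 := by
  rintro rfl
  simpa using h.1

theorem IsLTerm.unique (hΦ : ∀ lam mu, Φ (nm ξ dd lam mu) = monomial (expof lam mu) 1)
    {w : W} {d e : (Fin n ⊕ Fin n) →₀ ℕ} (hd : IsLTerm ξ dd Φ ρ w d) (he : IsLTerm ξ dd Φ ρ w e) :
    d = e :=
  rD_antisymm hΦ (he.2 d hd.1) (hd.2 e he.1)

theorem IsLTerm.add_of_lt {y z : W} {d : (Fin n ⊕ Fin n) →₀ ℕ} (hy : IsLTerm ξ dd Φ ρ y d)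
    (hz : ∀ s ∈ (Φ z).support, rD ξ dd ρ s d ∧ s ≠ d) : IsLTerm ξ dd Φ ρ (y + z) d := by
  classical
  have hzd : coeff d (Φ z) = 0 := notMem_support_iff.1 fun h => (hz d h).2 rfl
  refine ⟨?_, fun s hs => ?_⟩
  · rw [map_add, mem_support_iff, coeff_add, hzd, add_zero]
    exact mem_support_iff.1 hy.1
  · rw [map_add] at hs
    rcases Finset.mem_union.1 (support_add hs) with h | h
    exacts [hy.2 s h, (hz s h).1]

theorem isLTerm_iff_of_agree {r r' : TO ↥(NormalMonomials ξ dd)} {w : W}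
    (hagree : ∀ c ∈ (Φ w).support, ∀ d ∈ (Φ w).support, rD ξ dd r c d ↔ rD ξ dd r' c d)
    (e : (Fin n ⊕ Fin n) →₀ ℕ) : IsLTerm ξ dd Φ r w e ↔ IsLTerm ξ dd Φ r' w e :=
  and_congr_right fun he => forall₂_congr fun c hc => hagree c hc e he

theorem IsLTerm.smul_nmD_mul (hξ : ∀ i j, Commute (ξ i) (ξ j))
    (hdd : ∀ i j, Commute (dd i) (dd j))
    (hrel : ∀ i j, dd i * ξ j - ξ j * dd i = if i = j then (1 : W) else 0)
    (hΦ : ∀ lam mu, Φ (nm ξ dd lam mu) = monomial (expof lam mu) 1)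
    (hρ : IsNormalOrdering ξ dd ρ) {b : W} {eb e : (Fin n ⊕ Fin n) →₀ ℕ}
    (hb : IsLTerm ξ dd Φ ρ b eb) (hle : eb ≤ e) {a : K} (ha : a ≠ 0) :
    coeff e (Φ ((a / coeff eb (Φ b)) • (nmD ξ dd (e - eb) : W) * b)) = a ∧
      IsLTerm ξ dd Φ ρ ((a / coeff eb (Φ b)) • (nmD ξ dd (e - eb) : W) * b) e := by
  obtain ⟨hcoeff, hsupp⟩ := IsLTerm.coeff_nmD_mul_and_rD hξ hdd hrel hΦ hρ hb (e - eb)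
  rw [tsub_add_cancel_of_le hle] at hcoeff hsupp
  have hΦm : Φ ((a / coeff eb (Φ b)) • (nmD ξ dd (e - eb) : W) * b)
      = (a / coeff eb (Φ b)) • Φ (nmD ξ dd (e - eb) * b) := by
    rw [smul_mul_assoc, map_smul]
  have hme : coeff e (Φ ((a / coeff eb (Φ b)) • (nmD ξ dd (e - eb) : W) * b)) = a := by
    rw [hΦm, coeff_smul, hcoeff, smul_eq_mul, div_mul_cancel₀ _ (mem_support_iff.1 hb.1)]
  refine ⟨hme, mem_support_iff.2 (by rwa [hme]), fun x hx => hsupp x ?_⟩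
  rw [hΦm] at hx
  exact Finsupp.support_smul hx

theorem exists_isLTerm_eq_isLTerm_of_mem (hξ : ∀ i j, Commute (ξ i) (ξ j))
    (hdd : ∀ i j, Commute (dd i) (dd j))
    (hrel : ∀ i j, dd i * ξ j - ξ j * dd i = if i = j then (1 : W) else 0)
    (hΦ : ∀ lam mu, Φ (nm ξ dd lam mu) = monomial (expof lam mu) 1)
    {r r' : TO ↥(NormalMonomials ξ dd)} (hr : IsNormalOrdering ξ dd r)
    (hr' : IsNormalOrdering ξ dd r') {L : Submodule W W}
    (hL : ∀ x ∈ L, ∀ e, IsLTerm ξ dd Φ r x e →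
      ∃ b ∈ L, ∃ eb ≤ e, IsLTerm ξ dd Φ r b eb ∧ IsLTerm ξ dd Φ r' b eb)
    {x : W} (hx : x ∈ L) (hx0 : x ≠ 0) :
    ∃ d, IsLTerm ξ dd Φ r' x d ∧ ∃ y ∈ L, IsLTerm ξ dd Φ r y d := by
  classical
  -- Subtracting from `x` the multiple `m` of `b` with the same `r`-leading term leaves a
  -- remainder of smaller `r`-leading exponent. As `e` does not occur in the remainder, nothing
  -- cancels at the `r'`-larger of `e` and the remainder's `r'`-leading exponent `d'`.
  obtain ⟨e, he⟩ := exists_isLTerm Φ r hx0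
  clear hx0
  induction e using (wellFounded_rD hr).induction generalizing x with
  | _ e ih =>
  obtain ⟨b, hbL, eb, hle, hb, hb'⟩ := hL x hx e he
  have ha : coeff e (Φ x) ≠ 0 := mem_support_iff.1 he.1
  obtain ⟨hme, hm⟩ := hb.smul_nmD_mul hξ hdd hrel hΦ hr hle ha
  have hm' := (hb'.smul_nmD_mul hξ hdd hrel hΦ hr' hle ha).2
  set m := (coeff e (Φ x) / coeff eb (Φ b)) • (nmD ξ dd (e - eb) : W) * b
  have hyL : x - m ∈ L := L.sub_mem hx (L.smul_mem _ hbL)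
  have hye : e ∉ (Φ (x - m)).support := by simp [map_sub, hme]
  have hxy : x = m + (x - m) := (add_sub_cancel m x).symm
  rcases eq_or_ne (x - m) 0 with hy0 | hy0
  · exact ⟨e, by rwa [hxy, hy0, add_zero], x, hx, he⟩
  obtain ⟨e', he'⟩ := exists_isLTerm Φ r hy0
  have hlt : rD ξ dd r e' e ∧ ¬rD ξ dd r e e' := by
    have hsub := support_sub (Fin n ⊕ Fin n) (Φ x) (Φ m)
    rw [← map_sub] at hsub
    have he'e : rD ξ dd r e' e := by
      rcases Finset.mem_union.1 (hsub he'.1) with h | h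
      exacts [he.2 e' h, hm.2 e' h]
    exact ⟨he'e, fun h => hye (rD_antisymm hΦ h he'e ▸ he'.1)⟩
  obtain ⟨d', hd', hd'L⟩ := ih e' hlt hyL he'
  have hd'e : d' ≠ e := fun h => hye (h ▸ hd'.1)
  rcases rD_total r' e d' with h | h
  · refine ⟨d', ?_, hd'L⟩
    rw [hxy, add_comm]
    exact hd'.add_of_lt fun s hs => ⟨rD_trans (hm'.2 s hs) h,
      fun hsd => hd'e (rD_antisymm hΦ (hsd ▸ hm'.2 s hs) h)⟩
  · refine ⟨e, ?_, x, hx, he⟩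
    rw [hxy]
    exact hm'.add_of_lt fun s hs => ⟨rD_trans (hd'.2 s hs) h, fun hse => hye (hse ▸ hs)⟩

theorem LTIdeal_le_LTIdeal_of_mem (hξ : ∀ i j, Commute (ξ i) (ξ j))
    (hdd : ∀ i j, Commute (dd i) (dd j))
    (hrel : ∀ i j, dd i * ξ j - ξ j * dd i = if i = j then (1 : W) else 0)
    (hΦ : ∀ lam mu, Φ (nm ξ dd lam mu) = monomial (expof lam mu) 1)
    {r r' : TO ↥(NormalMonomials ξ dd)} (hr : IsNormalOrdering ξ dd r)
    (hr' : IsNormalOrdering ξ dd r') {L : Submodule W W}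
    (hL : ∀ x ∈ L, ∀ e, IsLTerm ξ dd Φ r x e →
      ∃ b ∈ L, ∃ eb ≤ e, IsLTerm ξ dd Φ r b eb ∧ IsLTerm ξ dd Φ r' b eb) :
    LTIdeal ξ dd Φ r' L ≤ LTIdeal ξ dd Φ r L := by
  refine Ideal.span_le.2 ?_
  rintro _ ⟨x, hx, hx0, d, hd, rfl⟩
  obtain ⟨d', hd', y, hy, hyd'⟩ :=
    exists_isLTerm_eq_isLTerm_of_mem hξ hdd hrel hΦ hr hr' hL hx hx0
  rw [hd.unique hΦ hd']
  exact Ideal.subset_span ⟨y, hy, hyd'.ne_zero, d', hyd', rfl⟩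

theorem IsGroebnerBasis.exists_isLTerm_le {L : Submodule W W} {B : Finset W}
    (hB : IsGroebnerBasis ξ dd Φ ρ L B) {x : W} (hx : x ∈ L) {e : (Fin n ⊕ Fin n) →₀ ℕ}
    (he : IsLTerm ξ dd Φ ρ x e) : ∃ b ∈ B, ∃ eb ≤ e, IsLTerm ξ dd Φ ρ b eb := by
  have hmem : monomial e (1 : K) ∈ LTIdeal ξ dd Φ ρ L :=
    Ideal.subset_span ⟨x, hx, he.ne_zero, e, he, rfl⟩
  have hgens : {p | ∃ b ∈ B, b ≠ 0 ∧ ∃ d, IsLTerm ξ dd Φ ρ b d ∧ p = monomial d (1 : K)} ⊆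
      (fun s => monomial s 1) '' {d | ∃ b ∈ B, IsLTerm ξ dd Φ ρ b d} := by
    rintro _ ⟨b, hb, -, d, hd, rfl⟩
    exact ⟨d, ⟨b, hb, hd⟩, rfl⟩
  rw [hB.2.2] at hmem
  obtain ⟨eb, ⟨b, hb, hbeb⟩, hle⟩ :=
    mem_ideal_span_monomial_image.1 (Ideal.span_mono hgens hmem) e (by simp)
  exact ⟨b, hb, eb, hle, hbeb⟩

end LeadingTerms

theorem groebnerBasis_of_restriction_eq_general
    {K : Type*} [Field K] {n : ℕ}
    {W : Type*} [Ring W] [Algebra K W] (ξ dd : Fin n → W)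
    (hξcomm : ∀ i j, ξ i * ξ j = ξ j * ξ i)
    (hddcomm : ∀ i j, dd i * dd j = dd j * dd i)
    (hrel : ∀ i j, dd i * ξ j - ξ j * dd i = if i = j then (1 : W) else 0)
    (Φ : W ≃ₗ[K] MvPolynomial (Fin n ⊕ Fin n) K)
    (hΦ : ∀ lam mu, Φ (nm ξ dd lam mu) = MvPolynomial.monomial (expof lam mu) 1)
    (r r' : TO ↥(NormalMonomials ξ dd))
    (hr : IsNormalOrdering ξ dd r) (hr' : IsNormalOrdering ξ dd r')
    (L : Submodule W W) (B : Finset W) (hB : IsGroebnerBasis ξ dd Φ r L B)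
    (hagree : ∀ d e : (Fin n ⊕ Fin n) →₀ ℕ,
      d ∈ ⋃ b ∈ B, ((Φ b).support : Set ((Fin n ⊕ Fin n) →₀ ℕ)) →
      e ∈ ⋃ b ∈ B, ((Φ b).support : Set ((Fin n ⊕ Fin n) →₀ ℕ)) →
      (rD ξ dd r d e ↔ rD ξ dd r' d e)) :
    IsGroebnerBasis ξ dd Φ r' L B := by
  have hlt_iff : ∀ b ∈ B, ∀ e, IsLTerm ξ dd Φ r b e ↔ IsLTerm ξ dd Φ r' b e := fun b hb =>
    isLTerm_iff_of_agree fun c hc d hd =>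
      hagree c d (Set.mem_iUnion₂.2 ⟨b, hb, hc⟩) (Set.mem_iUnion₂.2 ⟨b, hb, hd⟩)
  have hgens : {p | ∃ b ∈ B, b ≠ 0 ∧ ∃ d, IsLTerm ξ dd Φ r b d ∧ p = monomial d (1 : K)} =
      {p | ∃ b ∈ B, b ≠ 0 ∧ ∃ d, IsLTerm ξ dd Φ r' b d ∧ p = monomial d 1} := by
    ext p
    exact exists_congr fun b => and_congr_right fun hb => and_congr_right fun _ =>
      exists_congr fun d => and_congr_left fun _ => hlt_iff b hb d
  have hL : ∀ x ∈ L, ∀ e, IsLTerm ξ dd Φ r x e →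
      ∃ b ∈ L, ∃ eb ≤ e, IsLTerm ξ dd Φ r b eb ∧ IsLTerm ξ dd Φ r' b eb := fun x hx e he => by
    obtain ⟨b, hb, eb, hle, hbeb⟩ := hB.exists_isLTerm_le hx he
    exact ⟨b, hB.1 hb, eb, hle, hbeb, (hlt_iff b hb eb).1 hbeb⟩
  refine ⟨hB.1, hB.2.1, le_antisymm ?_ (Ideal.span_mono ?_)⟩
  · rw [← hgens, ← hB.2.2]
    exact LTIdeal_le_LTIdeal_of_mem hξcomm hddcomm hrel hΦ hr hr' hL
  · rintro _ ⟨b, hb, hb0, d, hd, rfl⟩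
    exact ⟨b, hB.1 hb, hb0, d, hd, rfl⟩

/-- if `B` is a Gröbner basis of the left ideal `L` with respect to the normal
ordering `≼`, and `≼'` is a normal ordering agreeing with `≼` on `Supp(B)`, then `B` is a
Gröbner basis of `L` with respect to `≼'` as well. -/
theorem groebnerBasis_of_restriction_eq
    {K : Type*} [Field K] [CharZero K] {n : ℕ} (hn : 1 ≤ n)
    {W : Type*} [Ring W] [Algebra K W] (ξ dd : Fin n → W)
    (hξcomm : ∀ i j, ξ i * ξ j = ξ j * ξ i)
    (hddcomm : ∀ i j, dd i * dd j = dd j * dd i)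
    (hrel : ∀ i j, dd i * ξ j - ξ j * dd i = if i = j then (1 : W) else 0)
    (Φ : W ≃ₗ[K] MvPolynomial (Fin n ⊕ Fin n) K)
    (hΦ : ∀ lam mu, Φ (nm ξ dd lam mu) = MvPolynomial.monomial (expof lam mu) 1)
    (r r' : TO ↥(NormalMonomials ξ dd))
    (hr : IsNormalOrdering ξ dd r) (hr' : IsNormalOrdering ξ dd r')
    (L : Submodule W W) (B : Finset W) (hB : IsGroebnerBasis ξ dd Φ r L B)
    (hagree : ∀ d e : (Fin n ⊕ Fin n) →₀ ℕ,
      d ∈ ⋃ b ∈ B, ((Φ b).support : Set ((Fin n ⊕ Fin n) →₀ ℕ)) →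
      e ∈ ⋃ b ∈ B, ((Φ b).support : Set ((Fin n ⊕ Fin n) →₀ ℕ)) →
      (rD ξ dd r d e ↔ rD ξ dd r' d e)) :
    IsGroebnerBasis ξ dd Φ r' L B :=
  groebnerBasis_of_restriction_eq_general ξ dd hξcomm hddcomm hrel Φ hΦ r r' hr hr' L B hB hagree
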